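/- Second difference operator formula (Proposition 4.1, part 2): for every Schwartz function κ : ℝ⁴ → ℂ, every Schwartz function h : ℝ → ℂ, every λ ∈ ℝ \ {0}, and u ∈ ℝ, the function μ ↦ (π_{λ,μ}(κ)h)(u) is differentiable on ℝ, and ∂_μ (π_{λ,μ}(κ)h)(u) = (i/(2λ)) (π_{λ,μ}(x₂κ)h)(u); equivalently Δ_{x₂}π_{λ,μ}(κ) = (2λ/i) ∂_μ π_{λ,μ}(κ). -/

import Mathlib

/-! The phase of `π_{λ,μ}` depends on `μ` only through the term `(μ / (2λ)) x₂`, so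
`μ ↦ (π_{λ,μ}(κ)h)(u)` is `t ↦ ∫ f(x) exp(i (t x₂ + b(x))) dx` evaluated at `t = μ / (2λ)`,
with `f(x) = κ(x) h(u - x₁)`. Differentiating under the integral sign in `t`, which is
justified because `x₂ f` is integrable and dominates the `t`-derivative uniformly, brings
down `i x₂`; the chain rule then supplies the factor `1 / (2λ)`. -/

open MeasureTheory Complex

noncomputable section

/-- The group Fourier transform on the Engel group:
`(π_{λ,μ}(κ)h)(u) = ∫_{ℝ⁴} κ(x) exp(i((μ/(2λ))x₂ − λx₄ + λx₃(u−x₁) − (λ/2)x₂(u−x₁)²)) h(u−x₁) dx`. -/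
def piF (lam mu : ℝ) (κ : ℝ × ℝ × ℝ × ℝ → ℂ) (h : ℝ → ℂ) (u : ℝ) : ℂ :=
  ∫ x : ℝ × ℝ × ℝ × ℝ,
    κ x * Complex.exp (Complex.I *
      (((mu / (2 * lam)) * x.2.1 - lam * x.2.2.2 + lam * x.2.2.1 * (u - x.1)
        - (lam / 2) * x.2.1 * (u - x.1) ^ 2 : ℝ) : ℂ)) * h (u - x.1)

theorem hasDerivAt_integral_mul_cexp_I_mul {α : Type*} [MeasurableSpace α] {μ : Measure α}
    {f : α → ℂ} {a b : α → ℝ} (hf : Integrable f μ)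
    (haf : Integrable (fun x ↦ (a x : ℂ) * f x) μ) (ha : AEStronglyMeasurable a μ)
    (hb : AEStronglyMeasurable b μ) (t : ℝ) :
    HasDerivAt (fun t : ℝ ↦ ∫ x, f x * cexp (I * ↑(t * a x + b x)) ∂μ)
      (I * ∫ x, (a x : ℂ) * f x * cexp (I * ↑(t * a x + b x)) ∂μ) t := by
  have hphase (s : ℝ) : AEStronglyMeasurable (fun x ↦ cexp (I * ↑(s * a x + b x))) μ :=
    continuous_exp.comp_aestronglyMeasurable
      ((continuous_ofReal.comp_aestronglyMeasurable ((ha.const_mul s).add hb)).const_mul I)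
  have hderiv (x : α) (s : ℝ) : HasDerivAt (fun s : ℝ ↦ f x * cexp (I * ↑(s * a x + b x)))
      (I * ((a x : ℂ) * f x * cexp (I * ↑(s * a x + b x)))) s := by
    have hlin : HasDerivAt (fun s : ℝ ↦ I * ((s * a x + b x : ℝ) : ℂ)) (I * a x) s := by
      simpa using (((hasDerivAt_id s).mul_const (a x)).add_const (b x)).ofReal_comp.const_mul I
    exact (hlin.cexp.const_mul (f x)).congr_deriv (by ring)
  have hdominated (x : α) (s : ℝ) :
      ‖I * ((a x : ℂ) * f x * cexp (I * ↑(s * a x + b x)))‖ ≤ ‖(a x : ℂ) * f x‖ := by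
    rw [norm_mul, norm_mul, norm_I, norm_exp_I_mul_ofReal, one_mul, mul_one]
  have key := hasDerivAt_integral_of_dominated_loc_of_deriv_le (Metric.ball_mem_nhds t one_pos)
    (.of_forall fun s ↦ hf.aestronglyMeasurable.mul (hphase s))
    (hf.mul_bdd (hphase t) (.of_forall fun x ↦ (norm_exp_I_mul_ofReal _).le))
    ((haf.aestronglyMeasurable.mul (hphase t)).const_mul I)
    (.of_forall fun x s _ ↦ hdominated x s) haf.norm (.of_forall fun x s _ ↦ hderiv x s)
  rw [← integral_const_mul]
  exact key.2

-- Instance search does not see through the nested products, and `volume` on `ℝ × ℝ × ℝ × ℝ`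
-- needs to be additive Haar to have temperate growth.
instance : (volume : Measure (ℝ × ℝ × ℝ)).IsAddHaarMeasure :=
  Measure.prod.instIsAddHaarMeasure _ _

instance : (volume : Measure (ℝ × ℝ × ℝ × ℝ)).IsAddHaarMeasure :=
  Measure.prod.instIsAddHaarMeasure _ _

namespace SchwartzMap

variable {D : Type*} [NormedAddCommGroup D] [NormedSpace ℝ D] [MeasurableSpace D] [BorelSpace D]
  [SecondCountableTopology D] {μ : Measure D} [μ.HasTemperateGrowth]

theorem integrable_mul_comp (f : 𝓢(D, ℂ)) (g : 𝓢(ℝ, ℂ)) {φ : D → ℝ}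
    (hφ : AEStronglyMeasurable φ μ) : Integrable (fun x ↦ f x * g (φ x)) μ :=
  f.integrable.mul_bdd (g.continuous.comp_aestronglyMeasurable hφ)
    (.of_forall fun x ↦ g.norm_le_seminorm ℂ (φ x))

theorem integrable_clm_mul_mul_comp (L : D →L[ℝ] ℝ) (f : 𝓢(D, ℂ)) (g : 𝓢(ℝ, ℂ)) {φ : D → ℝ}
    (hφ : AEStronglyMeasurable φ μ) : Integrable (fun x ↦ (L x : ℂ) * (f x * g (φ x))) μ := by
  have hL : Function.HasTemperateGrowth fun x ↦ (L x : ℂ) :=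
    (ofRealCLM.comp L).hasTemperateGrowth
  simpa [smulLeftCLM_apply_apply hL, mul_assoc] using
    (smulLeftCLM ℂ (fun x ↦ (L x : ℂ)) f).integrable_mul_comp g hφ

end SchwartzMap

theorem piF_eq_integral_mul_cexp (lam m u : ℝ) (κ : ℝ × ℝ × ℝ × ℝ → ℂ) (h : ℝ → ℂ) :
    piF lam m κ h u = ∫ x, κ x * h (u - x.1) * cexp (I * ((m / (2 * lam) * x.2.1 +
      (-lam * x.2.2.2 + lam * x.2.2.1 * (u - x.1) - lam / 2 * x.2.1 * (u - x.1) ^ 2) : ℝ) : ℂ)) := by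
  unfold piF
  congr 1 with x
  rw [mul_right_comm]
  congr 4
  ring

/-- Second difference operator formula (Proposition 4.1, part 2): for every Schwartz `κ`
and `h`, every `λ ≠ 0` and `u`, the map `μ ↦ (π_{λ,μ}(κ)h)(u)` is differentiable on `ℝ`
with `∂_μ (π_{λ,μ}(κ)h)(u) = (i/(2λ)) (π_{λ,μ}(x₂κ)h)(u)`; equivalently
`Δ_{x₂}π_{λ,μ}(κ) = (2λ/i) ∂_μ π_{λ,μ}(κ)`. -/
theorem engel_difference_operator_x2 :
    ∀ κ : SchwartzMap (ℝ × ℝ × ℝ × ℝ) ℂ, ∀ h : SchwartzMap ℝ ℂ,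
      ∀ lam : ℝ, lam ≠ 0 → ∀ u : ℝ, ∀ mu : ℝ,
        HasDerivAt (fun m : ℝ => piF lam m κ h u)
          ((Complex.I / (2 * (lam : ℂ))) *
            piF lam mu (fun x => (x.2.1 : ℂ) * κ x) h u) mu := by
  intro κ h lam _ u mu
  set f : ℝ × ℝ × ℝ × ℝ → ℂ := fun x ↦ κ x * h (u - x.1)
  set b : ℝ × ℝ × ℝ × ℝ → ℝ := fun x ↦
    -lam * x.2.2.2 + lam * x.2.2.1 * (u - x.1) - lam / 2 * x.2.1 * (u - x.1) ^ 2
  have hshift : Continuous fun x : ℝ × ℝ × ℝ × ℝ ↦ u - x.1 := by fun_prop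
  have hf : Integrable f := κ.integrable_mul_comp h hshift.aestronglyMeasurable
  have hx₂f : Integrable fun x ↦ (x.2.1 : ℂ) * f x :=
    κ.integrable_clm_mul_mul_comp ((ContinuousLinearMap.fst ℝ ℝ (ℝ × ℝ)).comp
      (ContinuousLinearMap.snd ℝ ℝ (ℝ × ℝ × ℝ))) h hshift.aestronglyMeasurable
  have hdiff := hasDerivAt_integral_mul_cexp_I_mul hf hx₂f
    (by fun_prop : Continuous fun x : ℝ × ℝ × ℝ × ℝ ↦ x.2.1).aestronglyMeasurable
    (by fun_prop : Continuous b).aestronglyMeasurable (mu / (2 * lam))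
  have hfun : (fun m ↦ piF lam m κ h u)
      = (fun t ↦ ∫ x, f x * cexp (I * ↑(t * x.2.1 + b x))) ∘ fun m ↦ m / (2 * lam) :=
    funext fun m ↦ piF_eq_integral_mul_cexp lam m u κ h
  rw [hfun, piF_eq_integral_mul_cexp]
  refine (hdiff.scomp mu ((hasDerivAt_id mu).div_const (2 * lam))).congr_deriv ?_
  rw [Complex.real_smul, ← mul_assoc]
  congr 1
  · push_cast
    ring
  · congr 1 with x
    ring
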